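/- arXiv:2302.12821 — 4 statements merged into one kernel-verified Lean document; each statement's English description precedes it below -/
import Mathlib

section
/- In a quantum state discrimination task with ensemble {ρ_x}_{x∈X} and uniform prior, if p is the optimal success probability over all POVMs, then the Pretty Good Measurement achieves success probability at least p². -/
/-!
Write `σ = ∑ₓ ρₓ`, `S = σ^{1/2}` and `T = σ^{-1/2}` (pseudo-inverse), so that the PGM has
elements `T ρₓ T`. Fix a POVM `N` and apply Cauchy–Schwarz to the positive semidefinite form
`⟪u, v⟫ = ∑ₓ Re Tr(uₓᴴ S vₓ S)` with `u = N` and `vₓ = T ρₓ T`: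
* since `0 ≤ ρₓ ≤ σ`, the kernel of `σ` lies in that of `ρₓ`, so `ρₓ T S = ρₓ` and
  `⟪N, v⟫ = ∑ₓ Re Tr(Nₓ ρₓ)`;
* `⟪v, v⟫ = ∑ₓ Re Tr(T ρₓ T ρₓ)` is `|X|` times the success probability of the PGM;
* `Nₓ ≤ 1` gives `⟪N, N⟫ ≤ ∑ₓ Re Tr(Nₓ σ) ≤ Re Tr σ = |X|`.
Hence the square of the success probability of every POVM is at most that of the PGM, and so is
the square of their supremum.
-/

open scoped BigOperators ComplexOrder

variable {X d : Type*}

/-- Sub-normalised POVMs are allowed: the missing mass `1 - ∑ x, N x` is an extra outcome. -/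
def IsPOVM [Fintype X] [Fintype d] [DecidableEq d] (N : X → Matrix d d ℂ) : Prop :=
  (∀ x, (N x).PosSemidef) ∧ (1 - ∑ x, N x).PosSemidef

noncomputable def succProb [Fintype X] [Fintype d] [DecidableEq d]
    (ρ N : X → Matrix d d ℂ) : ℝ :=
  ((Fintype.card X : ℝ))⁻¹ * ∑ x, (Matrix.trace (N x * ρ x)).re

open scoped MatrixOrder
open Matrix

theorem IsLUB.sq_le_of_forall_sq_le {s : Set ℝ} {p c : ℝ} (hp : IsLUB s p) (h0 : 0 ∈ s)
    (h : ∀ q ∈ s, q ^ 2 ≤ c) : p ^ 2 ≤ c := by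
  have hc : 0 ≤ c := by simpa using h 0 h0
  exact (Real.le_sqrt (hp.1 h0) hc).mp (hp.2 fun q hq => Real.le_sqrt_of_sq_le (h q hq))

noncomputable def pinvSqrt (t : ℝ) : ℝ := if t ≤ 0 then 0 else (√t)⁻¹

theorem pinvSqrt_mul_sqrt_mul_pinvSqrt (t : ℝ) : pinvSqrt t * √t * pinvSqrt t = pinvSqrt t := by
  unfold pinvSqrt
  split_ifs with ht
  · simp
  · have : √t ≠ 0 := (Real.sqrt_pos.mpr (not_le.mp ht)).ne'
    field_simp

theorem mul_pinvSqrt_mul_sqrt {t : ℝ} (ht : 0 ≤ t) : t * pinvSqrt t * √t = t := by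
  unfold pinvSqrt
  split_ifs with ht'
  · simp [le_antisymm ht' ht]
  · have : √t ≠ 0 := (Real.sqrt_pos.mpr (not_le.mp ht')).ne'
    field_simp

namespace Matrix

section Trace

variable {n 𝕜 : Type*} [Fintype n] [RCLike 𝕜]

theorem PosSemidef.trace_mul_nonneg {A B : Matrix n n 𝕜} (hA : A.PosSemidef)
    (hB : B.PosSemidef) : 0 ≤ (A * B).trace := by
  classical
  obtain ⟨C, rfl⟩ := CStarAlgebra.nonneg_iff_eq_star_mul_self.mp hB.nonneg
  rw [star_eq_conjTranspose, ← Matrix.mul_assoc, trace_mul_comm]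
  simpa only [Matrix.mul_assoc] using (hA.mul_mul_conjTranspose_same C).trace_nonneg

theorem trace_mul_le_trace_mul_of_le {A B C : Matrix n n 𝕜} (hAB : A ≤ B) (hC : C.PosSemidef) :
    (A * C).trace ≤ (B * C).trace := by
  have := hAB.trace_mul_nonneg hC
  rwa [Matrix.sub_mul, trace_sub, sub_nonneg] at this

theorem PosSemidef.mulVec_eq_zero_of_le {A B : Matrix n n 𝕜} (hA : A.PosSemidef) (hAB : A ≤ B)
    {v : n → 𝕜} (hv : B *ᵥ v = 0) : A *ᵥ v = 0 := by
  refine (hA.dotProduct_mulVec_zero_iff v).mp (le_antisymm ?_ (hA.dotProduct_mulVec_nonneg v))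
  have := hAB.dotProduct_mulVec_nonneg v
  rwa [sub_mulVec, hv, zero_sub, dotProduct_neg, neg_nonneg] at this

theorem PosSemidef.mul_eq_zero_of_le {A B M : Matrix n n 𝕜} (hA : A.PosSemidef) (hAB : A ≤ B)
    (hBM : B * M = 0) : A * M = 0 := by
  ext i j
  have hcol : B *ᵥ (fun k => M k j) = 0 := funext fun i => congrFun (congrFun hBM i) j
  exact congrFun (hA.mulVec_eq_zero_of_le hAB hcol) i

end Trace

section SandwichForm

variable {n 𝕜 : Type*} [Fintype n] [RCLike 𝕜] [Fintype X] {S : Matrix n n 𝕜}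

noncomputable def sandwichForm (S : Matrix n n 𝕜) :
    LinearMap.BilinForm ℝ (X → Matrix n n 𝕜) :=
  LinearMap.mk₂ ℝ (fun u v => ∑ x, RCLike.re ((u x)ᴴ * S * v x * S).trace)
    (fun u u' v => by simp [Matrix.add_mul, Finset.sum_add_distrib])
    (fun c u v => by simp [RCLike.smul_re, Finset.mul_sum])
    (fun u v v' => by simp [Matrix.mul_add, Matrix.add_mul, Finset.sum_add_distrib])
    (fun c u v => by simp [RCLike.smul_re, Finset.mul_sum])

theorem sandwichForm_apply (u v : X → Matrix n n 𝕜) :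
    sandwichForm S u v = ∑ x, RCLike.re ((u x)ᴴ * S * v x * S).trace := rfl

theorem sandwichForm_self_nonneg (hS : S.PosSemidef) (u : X → Matrix n n 𝕜) :
    0 ≤ sandwichForm S u u :=
  Finset.sum_nonneg fun x _ => RCLike.nonneg_iff.mp
    ((hS.conjTranspose_mul_mul_same (u x)).trace_mul_nonneg hS) |>.1

theorem sandwichForm_isSymm (hS : S.IsHermitian) :
    LinearMap.IsSymm (sandwichForm S : LinearMap.BilinForm ℝ (X → Matrix n n 𝕜)) := by
  refine ⟨fun u v => Finset.sum_congr rfl fun x _ => ?_⟩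
  rw [← RCLike.conj_re, starRingEnd_apply, ← trace_conjTranspose]
  simp only [conjTranspose_mul, conjTranspose_conjTranspose, hS.eq, Matrix.mul_assoc]
  rw [trace_mul_comm]
  simp only [Matrix.mul_assoc]

theorem sandwichForm_sq_le (hS : S.PosSemidef) (u v : X → Matrix n n 𝕜) :
    sandwichForm S u v ^ 2 ≤ sandwichForm S u u * sandwichForm S v v :=
  LinearMap.BilinForm.apply_sq_le_of_symm _ (sandwichForm_self_nonneg hS)
    (sandwichForm_isSymm hS.1) u v

end SandwichForm

section FunctionalCalculus

variable {n 𝕜 : Type*} [Fintype n] [DecidableEq n] [RCLike 𝕜] {A B : Matrix n n 𝕜}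

theorem continuousOn_real_spectrum (f : ℝ → ℝ) (A : Matrix n n 𝕜) :
    ContinuousOn f (spectrum ℝ A) :=
  A.finite_real_spectrum.continuousOn f

theorem sqrt_eq_cfc_real_sqrt (hA : 0 ≤ A) : CFC.sqrt A = cfc Real.sqrt A := by
  rw [CFC.sqrt_eq_real_sqrt A hA, cfcₙ_eq_cfc]

theorem cfc_pinvSqrt_mul_sqrt_mul_cfc_pinvSqrt (hA : 0 ≤ A) :
    cfc pinvSqrt A * CFC.sqrt A * cfc pinvSqrt A = cfc pinvSqrt A := by
  have hc := (continuousOn_real_spectrum · A)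
  rw [sqrt_eq_cfc_real_sqrt hA, ← cfc_mul _ _ A (hc _) (hc _), ← cfc_mul _ _ A (hc _) (hc _)]
  exact cfc_congr fun t _ => pinvSqrt_mul_sqrt_mul_pinvSqrt t

theorem mul_cfc_pinvSqrt_mul_sqrt (hA : 0 ≤ A) : A * cfc pinvSqrt A * CFC.sqrt A = A := by
  have hc := (continuousOn_real_spectrum · A)
  calc A * cfc pinvSqrt A * CFC.sqrt A = cfc (fun t => t * pinvSqrt t * √t) A := by
        rw [cfc_mul _ _ A (hc _) (hc _), cfc_mul _ _ A (hc _) (hc _),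
          cfc_id' ℝ A hA.isSelfAdjoint, sqrt_eq_cfc_real_sqrt hA]
    _ = cfc (fun t => t) A :=
        cfc_congr fun t ht => mul_pinvSqrt_mul_sqrt (spectrum_nonneg_of_nonneg hA ht)
    _ = A := cfc_id' ℝ A hA.isSelfAdjoint

theorem mul_cfc_pinvSqrt_mul_sqrt_of_le (hB : 0 ≤ B) (hBA : B ≤ A) :
    B * cfc pinvSqrt A * CFC.sqrt A = B := by
  have hker : A * (1 - cfc pinvSqrt A * CFC.sqrt A) = 0 := by
    rw [Matrix.mul_sub, Matrix.mul_one, ← Matrix.mul_assoc,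
      mul_cfc_pinvSqrt_mul_sqrt (hB.trans hBA), sub_self]
  have := hB.posSemidef.mul_eq_zero_of_le hBA hker
  rwa [Matrix.mul_sub, Matrix.mul_one, ← Matrix.mul_assoc, sub_eq_zero, eq_comm] at this

end FunctionalCalculus

end Matrix

section POVM

variable [Fintype X] [Fintype d] [DecidableEq d]

theorem IsPOVM.le_one {N : X → Matrix d d ℂ} (hN : IsPOVM N) (x : X) : N x ≤ 1 := by
  classical
  have hrest : 0 ≤ ∑ y ∈ Finset.univ.erase x, N y :=
    (posSemidef_sum _ fun y _ => hN.1 y).nonneg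
  calc N x ≤ N x + ∑ y ∈ Finset.univ.erase x, N y := le_add_of_nonneg_right hrest
    _ = ∑ y, N y := Finset.add_sum_erase _ _ (Finset.mem_univ x)
    _ ≤ 1 := hN.2

theorem IsPOVM.sandwichForm_self_le {N : X → Matrix d d ℂ} (hN : IsPOVM N) {S : Matrix d d ℂ}
    (hS : S.PosSemidef) : sandwichForm S N N ≤ (S * S).trace.re := by
  have hterm : ∀ x, ((N x)ᴴ * S * N x * S).trace ≤ (N x * (S * S)).trace := fun x => by
    have hSNS : (S * N x * S).PosSemidef := by
      simpa only [hS.1.eq] using (hN.1 x).conjTranspose_mul_mul_same S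
    calc ((N x)ᴴ * S * N x * S).trace = (N x * (S * N x * S)).trace := by
          rw [(hN.1 x).1.eq]; simp only [Matrix.mul_assoc]
      _ ≤ (1 * (S * N x * S)).trace := trace_mul_le_trace_mul_of_le (hN.le_one x) hSNS
      _ = (N x * (S * S)).trace := by
          rw [Matrix.one_mul, Matrix.mul_assoc, trace_mul_comm, Matrix.mul_assoc]
  have hsum : ∑ x, (N x * (S * S)).trace ≤ (S * S).trace := by
    have hSS : (S * S).PosSemidef := by
      simpa only [hS.1.eq] using posSemidef_conjTranspose_mul_self S
    rw [← trace_sum, ← Finset.sum_mul]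
    simpa only [Matrix.one_mul] using trace_mul_le_trace_mul_of_le hN.2 hSS
  rw [sandwichForm_apply, ← map_sum]
  exact (Complex.le_def.mp ((Finset.sum_le_sum fun x _ => hterm x).trans hsum)).1

theorem sq_sum_re_trace_mul_le {ρ N : X → Matrix d d ℂ} {S T : Matrix d d ℂ}
    (hρ : ∀ x, (ρ x).IsHermitian) (hN : IsPOVM N) (hS : S.PosSemidef) (hT : T.IsHermitian)
    (hρTS : ∀ x, ρ x * T * S = ρ x) (hTST : T * S * T = T) :
    (∑ x, (N x * ρ x).trace.re) ^ 2 ≤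
      (S * S).trace.re * ∑ x, (T * ρ x * T * ρ x).trace.re := by
  set M : X → Matrix d d ℂ := fun x => T * ρ x * T
  have hSTρ : ∀ x, S * T * ρ x = ρ x := fun x => by
    simpa [Matrix.mul_assoc, hS.1.eq, hT.eq, (hρ x).eq] using congrArg conjTranspose (hρTS x)
  have hNM : sandwichForm S N M = ∑ x, (N x * ρ x).trace.re := by
    refine Finset.sum_congr rfl fun x _ => ?_
    rw [(hN.1 x).1.eq, show N x * S * M x * S = N x * (S * T * ρ x * T * S) by
      simp only [M, Matrix.mul_assoc], hSTρ, hρTS]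
    rfl
  have hMM : sandwichForm S M M = ∑ x, (T * ρ x * T * ρ x).trace.re := by
    refine Finset.sum_congr rfl fun x _ => ?_
    have hM : (M x)ᴴ = M x := by simp [M, hT.eq, (hρ x).eq, Matrix.mul_assoc]
    rw [hM, show M x * S * M x * S = T * ρ x * (T * S * T) * (ρ x * T * S) by
      simp only [M, Matrix.mul_assoc], hTST, hρTS]
    rfl
  calc (∑ x, (N x * ρ x).trace.re) ^ 2 = sandwichForm S N M ^ 2 := by rw [hNM]
    _ ≤ sandwichForm S N N * sandwichForm S M M := sandwichForm_sq_le hS N M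
    _ ≤ _ := by
      rw [hMM]
      exact mul_le_mul_of_nonneg_right (hN.sandwichForm_self_le hS)
        (hMM ▸ sandwichForm_self_nonneg hS M)

theorem succProb_sq_le_succProb_pgm {ρ N : X → Matrix d d ℂ}
    (hρ : ∀ x, (ρ x).PosSemidef ∧ (ρ x).trace = 1) (hN : IsPOVM N) :
    succProb ρ N ^ 2 ≤
      succProb ρ (fun x => cfc pinvSqrt (∑ y, ρ y) * ρ x * cfc pinvSqrt (∑ y, ρ y)) := by
  set σ := ∑ y, ρ y
  have hρσ : ∀ x, ρ x ≤ σ := fun x =>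
    Finset.single_le_sum (fun y _ => (hρ y).1.nonneg) (Finset.mem_univ x)
  have hσ : 0 ≤ σ := (posSemidef_sum _ fun x _ => (hρ x).1).nonneg
  have htr : σ.trace.re = Fintype.card X := by simp [σ, trace_sum, (hρ _).2]
  have hcore := sq_sum_re_trace_mul_le (fun x => (hρ x).1.1) hN (CFC.sqrt_nonneg σ).posSemidef
    IsSelfAdjoint.cfc.isHermitian
    (fun x => mul_cfc_pinvSqrt_mul_sqrt_of_le (hρ x).1.nonneg (hρσ x))
    (cfc_pinvSqrt_mul_sqrt_mul_cfc_pinvSqrt hσ)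
  rw [CFC.sqrt_mul_sqrt_self σ hσ, htr] at hcore
  unfold succProb
  set k : ℝ := (Fintype.card X : ℝ)
  calc (k⁻¹ * ∑ x, (N x * ρ x).trace.re) ^ 2
        = k⁻¹ ^ 2 * (∑ x, (N x * ρ x).trace.re) ^ 2 := by ring
    _ ≤ k⁻¹ ^ 2 * (k * ∑ x, (cfc pinvSqrt σ * ρ x * cfc pinvSqrt σ * ρ x).trace.re) := by
        gcongr
    _ = _ := by
        rcases eq_or_ne k 0 with hk | hk
        · simp [hk]
        · field_simp

end POVM

/-- **The Pretty Good Measurement is optimal up to a quadratic loss.** If `p` is the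
optimal success probability over all POVMs at discriminating the ensemble `{ρ_x}` with
uniform prior, then the PGM, whose elements are `σ^{-1/2} ρ_x σ^{-1/2}` with
`σ = Σ_x ρ_x` (pseudoinverse square root), succeeds with probability at least `p²`. -/
theorem pgm_quadratic_optimal [Fintype X] [Fintype d] [DecidableEq d]
    (ρ : X → Matrix d d ℂ)
    (hρ : ∀ x, (ρ x).PosSemidef ∧ Matrix.trace (ρ x) = 1)
    (hσ : (∑ x, ρ x).IsHermitian)
    (p : ℝ)
    (hp : IsLUB {q : ℝ | ∃ N : X → Matrix d d ℂ, IsPOVM N ∧ q = succProb ρ N} p) :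
    p ^ 2 ≤ succProb ρ (fun x =>
      hσ.cfc (fun t => if t ≤ 0 then 0 else (Real.sqrt t)⁻¹) * ρ x *
      hσ.cfc (fun t => if t ≤ 0 then 0 else (Real.sqrt t)⁻¹)) := by
  have hzero : IsPOVM (fun _ : X => (0 : Matrix d d ℂ)) :=
    ⟨fun _ => PosSemidef.zero, by simpa using PosSemidef.one⟩
  rw [← hσ.cfc_eq]
  refine hp.sq_le_of_forall_sq_le ⟨_, hzero, by simp [succProb]⟩ ?_
  rintro _ ⟨N, hN, rfl⟩
  exact succProb_sq_le_succProb_pgm hρ hN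
end

section
/- Let σ̃ := Σ_{j∈[d]} (|j⟩⟨j| ⊗ I) Π_sym^{d,m+1} (|j⟩⟨j| ⊗ I). Then σ̃ = Σ_{j∈[d]} |j⟩⟨j| ⊗ Σ_{r=0}^m ((r+1)/(m+1)) Σ_{t⃗ ∈ T^m_{j,r}} |s(t⃗)⟩⟨s(t⃗)|, where T^m_{j,r} = {t⃗ ∈ I_{d,m} : t_j = r}. In particular, the vectors |j⟩ ⊗ |s(t⃗)⟩ with t⃗ ∈ I_{d,m} are exactly the eigenvectors of σ̃ with nonzero eigenvalue, the eigenvalue being (t_j+1)/(m+1). -/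
open scoped BigOperators Matrix

noncomputable def tensPow (α : Type*) (m : ℕ) (φ : α → ℂ) :
    EuclideanSpace ℂ (Fin m → α) := WithLp.toLp 2 (fun j => ∏ k, φ (j k))

noncomputable def symSubspace (α : Type*) (m : ℕ) :
    Submodule ℂ (EuclideanSpace ℂ (Fin m → α)) :=
  Submodule.span ℂ (Set.range (tensPow α m))

/-- Matrix of the orthogonal projector onto the symmetric subspace of `(ℂ^α)^{⊗m}`. -/
noncomputable def symProj (α : Type*) [Fintype α] [DecidableEq α] (m : ℕ) :
    Matrix (Fin m → α) (Fin m → α) ℂ :=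
  fun a b => (inner ℂ (EuclideanSpace.single a (1:ℂ))
    ((Submodule.orthogonalProjectionOnto (symSubspace α m) (EuclideanSpace.single b (1:ℂ)) :
      symSubspace α m) : EuclideanSpace ℂ (Fin m → α)) : ℂ)

def typeOf {α : Type*} [Fintype α] [DecidableEq α] {m : ℕ} (j : Fin m → α) : α → ℕ :=
  fun i => (Finset.univ.filter (fun k => j k = i)).card

def Idm (α : Type*) [Fintype α] [DecidableEq α] (m : ℕ) : Finset (α → ℕ) :=
  ((Finset.univ : Finset (α → Fin (m+1))).image (fun f i => (f i : ℕ))).filter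
    (fun t => ∑ i, t i = m)

noncomputable def typeVec (α : Type*) [Fintype α] [DecidableEq α] (m : ℕ) (t : α → ℕ) :
    EuclideanSpace ℂ (Fin m → α) :=
  WithLp.toLp 2 (fun j => if typeOf j = t then ((((Real.sqrt (Nat.multinomial Finset.univ t))⁻¹ : ℝ)) : ℂ)
    else 0)

/-- `|j⟩⟨j| ⊗ I`: projector onto basis state `j` of the first tensor factor. -/
def projFirst (α : Type*) [DecidableEq α] (m : ℕ) (j : α) :
    Matrix (Fin (m+1) → α) (Fin (m+1) → α) ℂ :=
  Matrix.diagonal (fun a => if a 0 = j then 1 else 0)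

/-- The vector `|j⟩ ⊗ |s(t⃗)⟩` in `(ℂ^α)^{⊗(m+1)}`. -/
noncomputable def basisTensTypeVec (α : Type*) [Fintype α] [DecidableEq α] (m : ℕ)
    (j : α) (t : α → ℕ) : (Fin (m+1) → α) → ℂ :=
  fun a => (if a 0 = j then (1 : ℂ) else 0) * typeVec α m t (fun i => a i.succ)

/-! The type vectors `|s(t)⟩`, `t ∈ I_{d,m}`, are orthonormal and span the symmetric subspace:
a product state `φ^{⊗m}` is `∑ₜ √(multinomial t) ∏ᵢ φᵢ^{tᵢ} |s(t)⟩`, and conversely a vector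
orthogonal to every product state makes the polynomial `z ↦ ⟨z^{⊗m}, y⟩` vanish, so its
coefficients `√(multinomial t) ⟨s(t), y⟩` vanish. Hence `Π_sym` has the entries
`[type a = type b] / multinomial (type a)`. Conjugating by `|j⟩⟨j| ⊗ I` keeps the entries with
`a₀ = b₀ = j`; the type of such a string is the type of its tail plus one at `j`, and
`multinomial (t + e_j) = (m + 1) / (t_j + 1) · multinomial t`, which turns these entries into
those of `∑ (t_j + 1)/(m + 1) |j, s(t)⟩⟨j, s(t)|`. The eigen-statements follow from the
orthonormality of the vectors `|j⟩ ⊗ |s(t)⟩`. -/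

open Finset

theorem eq_zero_of_forall_sum_mul_prod_pow_eq_zero {R σ : Type*} [CommRing R] [IsDomain R]
    [Infinite R] [Fintype σ] {s : Finset (σ → ℕ)} {c : (σ → ℕ) → R}
    (h : ∀ z : σ → R, ∑ t ∈ s, c t * ∏ i, z i ^ t i = 0) {t : σ → ℕ} (ht : t ∈ s) :
    c t = 0 := by
  classical
  set p : MvPolynomial σ R :=
    ∑ t ∈ s, MvPolynomial.monomial (Finsupp.equivFunOnFinite.symm t) (c t)
  have hp : p = 0 := MvPolynomial.funext fun z => by
    simpa [p, MvPolynomial.eval_monomial, Finsupp.prod_pow, mul_comm] using h z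
  simpa [p, MvPolynomial.coeff_sum, MvPolynomial.coeff_monomial, ht] using
    congrArg (MvPolynomial.coeff (Finsupp.equivFunOnFinite.symm t)) hp

theorem sum_smul_sum_fiberwise {ι κ R M : Type*} [DecidableEq κ] [Semiring R] [AddCommMonoid M]
    [Module R M] {s : Finset ι} {T : Finset κ} {g : ι → κ} (h : ∀ i ∈ s, g i ∈ T) (c : κ → R)
    (f : ι → M) :
    ∑ r ∈ T, c r • ∑ i ∈ s with g i = r, f i = ∑ i ∈ s, c (g i) • f i := by
  rw [← sum_fiberwise_of_maps_to h]
  refine sum_congr rfl fun r _ => ?_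
  rw [smul_sum]
  exact sum_congr rfl fun i hi => by rw [(mem_filter.mp hi).2]

section RankOne

variable {R ι n : Type*} [CommSemiring R] [Star R] [Fintype n] (s : Finset ι) (c : ι → R)
  (v : ι → n → R)

theorem sum_smul_vecMulVec_star_mulVec [DecidableEq ι] {k : ι} (hk : k ∈ s)
    (hv : ∀ i ∈ s, star (v i) ⬝ᵥ v k = if i = k then 1 else 0) :
    (∑ i ∈ s, c i • Matrix.vecMulVec (v i) (star (v i))) *ᵥ v k = c k • v k := by
  simp only [Matrix.sum_mulVec, Matrix.smul_mulVec, Matrix.vecMulVec_mulVec, op_smul_eq_smul]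
  rw [sum_eq_single_of_mem k hk fun i hi hne => by rw [hv i hi, if_neg hne, zero_smul, smul_zero],
    hv k hk, if_pos rfl, one_smul]

theorem sum_smul_vecMulVec_star_mulVec_eq_zero {w : n → R}
    (hw : ∀ i ∈ s, star (v i) ⬝ᵥ w = 0) :
    (∑ i ∈ s, c i • Matrix.vecMulVec (v i) (star (v i))) *ᵥ w = 0 := by
  simp only [Matrix.sum_mulVec, Matrix.smul_mulVec, Matrix.vecMulVec_mulVec, op_smul_eq_smul]
  exact sum_eq_zero fun i hi => by rw [hw i hi, zero_smul, smul_zero]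

end RankOne

theorem ofReal_inv_sqrt_mul_self (n : ℕ) :
    (((√n)⁻¹ : ℝ) : ℂ) * (((√n)⁻¹ : ℝ) : ℂ) = (n : ℂ)⁻¹ := by
  rw [← Complex.ofReal_mul, ← mul_inv, Real.mul_self_sqrt n.cast_nonneg]
  push_cast
  rfl

theorem ofReal_sqrt_multinomial_ne_zero {α : Type*} [Fintype α] (t : α → ℕ) :
    ((√(Nat.multinomial univ t) : ℝ) : ℂ) ≠ 0 :=
  Complex.ofReal_ne_zero.mpr (Real.sqrt_pos.mpr (by exact_mod_cast Nat.multinomial_pos _ _)).ne'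

section TypeVectors

variable {α : Type*} [Fintype α] [DecidableEq α] {m : ℕ}

theorem Idm_eq_piAntidiag : Idm α m = piAntidiag univ m := by
  ext t
  simp only [Idm, mem_filter, mem_image, mem_univ, true_and, mem_piAntidiag, ne_eq,
    implies_true, and_true, and_iff_right_iff_imp]
  intro ht
  exact ⟨fun i => ⟨t i, Nat.lt_succ_of_le (ht ▸ single_le_sum (fun _ _ => Nat.zero_le _)
    (mem_univ i))⟩, rfl⟩

theorem mem_Idm {t : α → ℕ} : t ∈ Idm α m ↔ ∑ i, t i = m := by
  simp [Idm_eq_piAntidiag]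

theorem le_of_mem_Idm {t : α → ℕ} (ht : t ∈ Idm α m) (i : α) : t i ≤ m :=
  mem_Idm.mp ht ▸ single_le_sum (fun _ _ => Nat.zero_le _) (mem_univ i)

theorem typeOf_mem_Idm (j : Fin m → α) : typeOf j ∈ Idm α m := by
  unfold typeOf
  rw [mem_Idm, ← card_eq_sum_card_fiberwise fun _ _ => mem_univ _, card_univ,
    Fintype.card_fin]

theorem prod_comp_eq_prod_pow_typeOf {M : Type*} [CommMonoid M] (φ : α → M) (j : Fin m → α) :
    ∏ k, φ (j k) = ∏ i, φ i ^ typeOf j i := by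
  rw [prod_comp]
  exact prod_subset (subset_univ _) fun i _ hi => by
    rw [filter_false_of_mem fun k _ (hk : j k = i) => hi (hk ▸ mem_image_of_mem j (mem_univ k)),
      card_empty, pow_zero]

theorem typeOf_cons (x : α) (f : Fin m → α) :
    typeOf (Fin.cons x f : Fin (m + 1) → α) = Pi.single x 1 + typeOf f := by
  ext i
  simp only [typeOf, card_filter, Fin.sum_univ_succ, Fin.cons_zero, Fin.cons_succ, Pi.add_apply,
    Pi.single_apply, eq_comm (a := x)]

theorem multinomial_single_add_mul (t : α → ℕ) (x : α) :
    Nat.multinomial univ (Pi.single x 1 + t) * (t x + 1) =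
      (∑ i, t i + 1) * Nat.multinomial univ t := by
  have hx : x ∉ univ.erase x := notMem_erase x univ
  have hoff : ∀ i ∈ univ.erase x, (Pi.single x 1 + t : α → ℕ) i = t i := fun i hi => by
    simp [ne_of_mem_erase hi]
  rw [← insert_erase (mem_univ x), Nat.multinomial_insert hx, Nat.multinomial_insert hx,
    Nat.multinomial_congr hoff, sum_congr rfl hoff]
  simp only [sum_insert hx, Pi.add_apply, Pi.single_eq_same]
  rw [add_comm 1 (t x), add_right_comm, mul_right_comm, ← Nat.add_one_mul_choose_eq]
  ring

theorem inv_multinomial_typeOf_cons (x : α) (f : Fin m → α) :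
    (Nat.multinomial univ (typeOf (Fin.cons x f : Fin (m + 1) → α)) : ℂ)⁻¹ =
      ((((typeOf f x : ℝ) + 1) / ((m : ℝ) + 1) : ℝ) : ℂ) *
        (Nat.multinomial univ (typeOf f) : ℂ)⁻¹ := by
  have h := multinomial_single_add_mul (typeOf f) x
  rw [mem_Idm.mp (typeOf_mem_Idm f)] at h
  have hN : (Nat.multinomial univ (typeOf f) : ℂ) ≠ 0 := by
    exact_mod_cast (Nat.multinomial_pos _ _).ne'
  have hN' : (Nat.multinomial univ (Pi.single x 1 + typeOf f) : ℂ) ≠ 0 := by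
    exact_mod_cast (Nat.multinomial_pos _ _).ne'
  rw [typeOf_cons]
  push_cast
  field_simp
  exact_mod_cast h.symm

theorem sum_card_typeOf_mul_prod_pow {R : Type*} [CommSemiring R] (z : α → R) :
    ∑ t ∈ Idm α m, (#{j : Fin m → α | typeOf j = t} : R) * ∏ i, z i ^ t i = (∑ i, z i) ^ m := by
  rw [← Fin.prod_const, Fintype.prod_sum]
  simp_rw [prod_comp_eq_prod_pow_typeOf]
  rw [← sum_fiberwise_of_maps_to fun j _ => typeOf_mem_Idm j]
  refine sum_congr rfl fun t _ => ?_
  rw [sum_congr rfl fun j hj => by rw [(mem_filter.mp hj).2], sum_const, nsmul_eq_mul]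

theorem card_typeOf_eq_multinomial {t : α → ℕ} (ht : t ∈ Idm α m) :
    #{j : Fin m → α | typeOf j = t} = Nat.multinomial univ t := by
  -- both are the coefficient of `∏ i, z i ^ t i` in `(∑ i, z i) ^ m`
  have hz : ∀ z : α → ℂ, ∑ t ∈ Idm α m,
      ((#{j : Fin m → α | typeOf j = t} : ℂ) - Nat.multinomial univ t) * ∏ i, z i ^ t i = 0 := by
    intro z
    rw [sum_congr rfl fun _ _ => sub_mul .., sum_sub_distrib, sum_card_typeOf_mul_prod_pow,
      Idm_eq_piAntidiag, sum_pow_eq_sum_piAntidiag, sub_self]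
  exact_mod_cast sub_eq_zero.mp (eq_zero_of_forall_sum_mul_prod_pow_eq_zero hz ht)

theorem typeVec_apply (t : α → ℕ) (j : Fin m → α) :
    typeVec α m t j =
      if typeOf j = t then (((√(Nat.multinomial univ t))⁻¹ : ℝ) : ℂ) else 0 := rfl

theorem star_typeVec_apply (t : α → ℕ) (j : Fin m → α) :
    star (typeVec α m t j) = typeVec α m t j := by
  rw [typeVec_apply]
  split_ifs <;> simp

theorem sum_mul_typeVec_mul_typeVec (c : (α → ℕ) → ℂ) (x y : Fin m → α) :
    ∑ t ∈ Idm α m, c t * typeVec α m t x * typeVec α m t y =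
      if typeOf x = typeOf y then c (typeOf x) * (Nat.multinomial univ (typeOf x) : ℂ)⁻¹
      else 0 := by
  rw [sum_eq_single_of_mem (typeOf x) (typeOf_mem_Idm x) fun t _ hne => by
    simp [typeVec_apply, Ne.symm hne]]
  rw [typeVec_apply, typeVec_apply, if_pos rfl]
  by_cases h : typeOf y = typeOf x
  · rw [if_pos h, if_pos h.symm, mul_assoc, ofReal_inv_sqrt_mul_self]
  · rw [if_neg h, if_neg (Ne.symm h), mul_zero]

theorem sum_typeVec_mul_typeVec {t t' : α → ℕ} (ht : t ∈ Idm α m) :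
    ∑ j : Fin m → α, typeVec α m t j * typeVec α m t' j = if t = t' then 1 else 0 := by
  split_ifs with h
  · subst h
    have hsq : ∀ j, typeVec α m t j * typeVec α m t j =
        if typeOf j = t then (Nat.multinomial univ t : ℂ)⁻¹ else 0 := fun j => by
      rw [typeVec_apply]
      split_ifs
      · exact ofReal_inv_sqrt_mul_self _
      · exact mul_zero 0
    rw [sum_congr rfl fun j _ => hsq j, ← sum_filter, sum_const, card_typeOf_eq_multinomial ht,
      nsmul_eq_mul, mul_inv_cancel₀ (by exact_mod_cast (Nat.multinomial_pos _ _).ne')]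
  · refine sum_eq_zero fun j _ => ?_
    simp only [typeVec_apply]
    split_ifs with h₁ h₂ <;> simp_all

theorem inner_typeVec {t t' : α → ℕ} (ht : t ∈ Idm α m) :
    inner ℂ (typeVec α m t) (typeVec α m t') = if t = t' then 1 else 0 := by
  simp only [PiLp.inner_apply, RCLike.inner_apply, starRingEnd_apply, star_typeVec_apply]
  simp only [mul_comm (typeVec α m t' _), sum_typeVec_mul_typeVec ht]

theorem sum_smul_typeVec_apply (c : (α → ℕ) → ℂ) (j : Fin m → α) :
    (∑ t ∈ Idm α m, c t • typeVec α m t) j =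
      c (typeOf j) * (((√(Nat.multinomial univ (typeOf j)))⁻¹ : ℝ) : ℂ) := by
  rw [WithLp.ofLp_sum, Finset.sum_apply, sum_eq_single_of_mem (typeOf j) (typeOf_mem_Idm j)
    fun t _ hne => by simp [typeVec_apply, Ne.symm hne]]
  simp [typeVec_apply]

theorem tensPow_eq_sum_smul_typeVec (φ : α → ℂ) :
    tensPow α m φ =
      ∑ t ∈ Idm α m, ((∏ i, φ i ^ t i) * ((√(Nat.multinomial univ t) : ℝ) : ℂ)) •
        typeVec α m t := by
  ext j
  rw [sum_smul_typeVec_apply, mul_assoc, Complex.ofReal_inv,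
    mul_inv_cancel₀ (ofReal_sqrt_multinomial_ne_zero _), mul_one]
  exact prod_comp_eq_prod_pow_typeOf φ j

theorem typeVec_mem_symSubspace {t : α → ℕ} (ht : t ∈ Idm α m) :
    typeVec α m t ∈ symSubspace α m := by
  rw [← Submodule.orthogonal_orthogonal (symSubspace α m), Submodule.mem_orthogonal]
  intro y hy
  have hpoly : ∀ z : α → ℂ, ∑ t ∈ Idm α m,
      ((√(Nat.multinomial univ t) : ℝ) * inner ℂ (typeVec α m t) y) * ∏ i, z i ^ t i = 0 := by
    intro z
    have h0 := Submodule.inner_right_of_mem_orthogonal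
      (Submodule.subset_span ⟨star z, rfl⟩ : tensPow α m (star z) ∈ symSubspace α m) hy
    rw [tensPow_eq_sum_smul_typeVec, sum_inner] at h0
    rw [← h0]
    refine sum_congr rfl fun t _ => ?_
    rw [inner_smul_left, map_mul, map_prod, Complex.conj_ofReal]
    simp only [map_pow, Pi.star_apply, starRingEnd_apply, star_star]
    ring
  exact inner_eq_zero_symm.mp ((mul_eq_zero.mp (eq_zero_of_forall_sum_mul_prod_pow_eq_zero hpoly
    ht)).resolve_left (ofReal_sqrt_multinomial_ne_zero t))

theorem symSubspace_eq_span_typeVec :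
    symSubspace α m = Submodule.span ℂ (typeVec α m '' Idm α m) := by
  apply le_antisymm
  · rw [symSubspace, Submodule.span_le]
    rintro _ ⟨φ, rfl⟩
    rw [tensPow_eq_sum_smul_typeVec]
    exact Submodule.sum_mem _ fun t ht =>
      Submodule.smul_mem _ _ (Submodule.subset_span ⟨t, ht, rfl⟩)
  · rw [Submodule.span_le]
    rintro _ ⟨t, ht, rfl⟩
    exact typeVec_mem_symSubspace ht

theorem starProjection_symSubspace_single (b : Fin m → α) :
    (symSubspace α m).starProjection (EuclideanSpace.single b 1) =
      ∑ t ∈ Idm α m, typeVec α m t b • typeVec α m t := by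
  refine Submodule.eq_starProjection_of_mem_of_inner_eq_zero
    (Submodule.sum_mem _ fun t ht => Submodule.smul_mem _ _ (typeVec_mem_symSubspace ht))
    fun w hw => ?_
  rw [symSubspace_eq_span_typeVec] at hw
  refine (Submodule.isOrtho_span.mpr ?_).inner_eq (Submodule.mem_span_singleton_self _) hw
  rintro _ rfl _ ⟨t, ht, rfl⟩
  rw [inner_sub_left, EuclideanSpace.inner_single_left, sum_inner,
    sum_eq_single_of_mem t ht fun t' ht' hne => by
      rw [inner_smul_left, inner_typeVec ht', if_neg hne, mul_zero]]
  rw [map_one, one_mul, inner_smul_left, inner_typeVec ht, if_pos rfl, mul_one, starRingEnd_apply,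
    star_typeVec_apply, sub_self]

theorem symProj_apply (a b : Fin m → α) :
    symProj α m a b =
      if typeOf a = typeOf b then (Nat.multinomial univ (typeOf a) : ℂ)⁻¹ else 0 := by
  rw [symProj, EuclideanSpace.inner_single_left, map_one, one_mul]
  change (symSubspace α m).starProjection (EuclideanSpace.single b 1) a = _
  rw [starProjection_symSubspace_single, sum_smul_typeVec_apply, typeVec_apply]
  by_cases h : typeOf a = typeOf b
  · rw [if_pos h.symm, if_pos h, ofReal_inv_sqrt_mul_self]
  · rw [if_neg (Ne.symm h), if_neg h, zero_mul]

theorem symProj_cons_cons (x : α) (f g : Fin m → α) :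
    symProj α (m + 1) (Fin.cons x f) (Fin.cons x g) =
      if typeOf f = typeOf g then
        ((((typeOf f x : ℝ) + 1) / ((m : ℝ) + 1) : ℝ) : ℂ) *
          (Nat.multinomial univ (typeOf f) : ℂ)⁻¹
      else 0 := by
  simp only [symProj_apply, typeOf_cons, add_right_inj]
  rw [← typeOf_cons x f, inv_multinomial_typeOf_cons]

theorem sum_projFirst_mul_mul_projFirst_apply (A : Matrix (Fin (m + 1) → α) (Fin (m + 1) → α) ℂ)
    (a b : Fin (m + 1) → α) :
    (∑ j, projFirst α m j * A * projFirst α m j) a b = if a 0 = b 0 then A a b else 0 := by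
  simp only [Matrix.sum_apply, projFirst, Matrix.mul_diagonal, Matrix.diagonal_mul]
  rw [sum_eq_single (a 0) fun j _ hne => by simp [Ne.symm hne]]
  · simp [eq_comm]
  · simp

theorem basisTensTypeVec_apply (j : α) (t : α → ℕ) (a : Fin (m + 1) → α) :
    basisTensTypeVec α m j t a = if a 0 = j then typeVec α m t (Fin.tail a) else 0 := by
  rw [basisTensTypeVec, ite_mul, one_mul, zero_mul]
  rfl

theorem star_basisTensTypeVec (j : α) (t : α → ℕ) :
    star (basisTensTypeVec α m j t) = basisTensTypeVec α m j t := by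
  ext a
  rw [Pi.star_apply, basisTensTypeVec_apply]
  split_ifs
  · exact star_typeVec_apply t _
  · exact star_zero ℂ

theorem star_basisTensTypeVec_dotProduct {p q : α × (α → ℕ)} (hp : p.2 ∈ Idm α m) :
    star (basisTensTypeVec α m p.1 p.2) ⬝ᵥ basisTensTypeVec α m q.1 q.2 =
      if p = q then 1 else 0 := by
  obtain ⟨j, t⟩ := p
  obtain ⟨j', t'⟩ := q
  rw [star_basisTensTypeVec, dotProduct, ← (Fin.consEquiv fun _ => α).sum_comp,
    Fintype.sum_prod_type]
  simp only [Fin.consEquiv, Equiv.coe_fn_mk, basisTensTypeVec_apply, Fin.cons_zero, Fin.tail_cons,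
    ite_mul, mul_ite, zero_mul, mul_zero]
  by_cases hj : j = j'
  · subst hj
    rw [Fintype.sum_eq_single j fun x hx => sum_eq_zero fun f _ => by rw [if_neg hx]]
    simp only [if_true, sum_typeVec_mul_typeVec hp, Prod.mk.injEq, true_and]
  · rw [if_neg fun h => hj (Prod.ext_iff.mp h).1]
    refine sum_eq_zero fun x _ => sum_eq_zero fun f _ => ?_
    split_ifs with h₁ h₂
    · exact absurd (h₂.symm.trans h₁) hj
    all_goals rfl

theorem sum_projFirst_mul_symProj_mul_projFirst :
    ∑ j, projFirst α m j * symProj α (m + 1) * projFirst α m j =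
      ∑ p ∈ univ ×ˢ Idm α m, ((((p.2 p.1 : ℝ) + 1) / ((m : ℝ) + 1) : ℝ) : ℂ) •
        Matrix.vecMulVec (basisTensTypeVec α m p.1 p.2) (star (basisTensTypeVec α m p.1 p.2)) := by
  ext a b
  obtain ⟨x, f, rfl⟩ : ∃ x f, a = Fin.cons x f := ⟨a 0, Fin.tail a, (Fin.cons_self_tail a).symm⟩
  obtain ⟨y, g, rfl⟩ : ∃ y g, b = Fin.cons y g := ⟨b 0, Fin.tail b, (Fin.cons_self_tail b).symm⟩
  rw [sum_projFirst_mul_mul_projFirst_apply, Matrix.sum_apply, sum_product]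
  simp only [Matrix.smul_apply, Matrix.vecMulVec_apply, star_basisTensTypeVec,
    basisTensTypeVec_apply, Fin.cons_zero, Fin.tail_cons, smul_eq_mul]
  rw [Fintype.sum_eq_single x fun j hj => sum_eq_zero fun t _ => by
    rw [if_neg (Ne.symm hj), zero_mul, mul_zero]]
  by_cases h : x = y
  · subst h
    simp only [if_true, ← mul_assoc]
    rw [sum_mul_typeVec_mul_typeVec, symProj_cons_cons]
  · simp only [if_neg h, if_neg (Ne.symm h), mul_zero, sum_const_zero]

end TypeVectors

/-- **Diagonal-block form of `σ̃ = Σ_j (|j⟩⟨j|⊗I) Π_sym^{d,m+1} (|j⟩⟨j|⊗I)`**: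
`σ̃ = Σ_j |j⟩⟨j| ⊗ Σ_{r=0}^m ((r+1)/(m+1)) Σ_{t⃗ : t_j = r} |s(t⃗)⟩⟨s(t⃗)|`; in particular
the vectors `|j⟩ ⊗ |s(t⃗)⟩`, `t⃗ ∈ I_{d,m}`, are exactly the eigenvectors of `σ̃` with
nonzero eigenvalue, the eigenvalue being `(t_j+1)/(m+1)`. -/
theorem sigmaTilde_eigen_decomposition (d m : ℕ) :
    (∑ j : Fin d, projFirst (Fin d) m j * symProj (Fin d) (m+1) * projFirst (Fin d) m j)
      = (∑ j : Fin d, ∑ r ∈ Finset.range (m+1),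
          ((((r : ℝ) + 1) / ((m : ℝ) + 1) : ℝ) : ℂ) •
            ∑ t ∈ (Idm (Fin d) m).filter (fun t => t j = r),
              Matrix.vecMulVec (basisTensTypeVec (Fin d) m j t)
                (star (basisTensTypeVec (Fin d) m j t)))
    ∧ (∀ j : Fin d, ∀ t ∈ Idm (Fin d) m,
        (∑ j' : Fin d, projFirst (Fin d) m j' * symProj (Fin d) (m+1) * projFirst (Fin d) m j')
            *ᵥ basisTensTypeVec (Fin d) m j t
          = ((((t j : ℝ) + 1) / ((m : ℝ) + 1) : ℝ) : ℂ) • basisTensTypeVec (Fin d) m j t)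
    ∧ (∀ w : (Fin (m+1) → Fin d) → ℂ,
        (∀ j : Fin d, ∀ t ∈ Idm (Fin d) m,
          star (basisTensTypeVec (Fin d) m j t) ⬝ᵥ w = 0) →
        (∑ j' : Fin d, projFirst (Fin d) m j' * symProj (Fin d) (m+1) * projFirst (Fin d) m j')
            *ᵥ w = 0) := by
  rw [sum_projFirst_mul_symProj_mul_projFirst]
  refine ⟨?_, fun j t ht => ?_, fun w hw => ?_⟩
  · rw [sum_product]
    refine sum_congr rfl fun j _ => ?_
    rw [sum_smul_sum_fiberwise fun t ht => mem_range_succ_iff.mpr (le_of_mem_Idm ht j)]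
  · exact sum_smul_vecMulVec_star_mulVec (univ ×ˢ Idm (Fin d) m) _
      (fun p => basisTensTypeVec (Fin d) m p.1 p.2) (k := (j, t))
      (mem_product.mpr ⟨mem_univ j, ht⟩)
      fun p hp => star_basisTensTypeVec_dotProduct (mem_product.mp hp).2
  · exact sum_smul_vecMulVec_star_mulVec_eq_zero (univ ×ˢ Idm (Fin d) m) _
      (fun p => basisTensTypeVec (Fin d) m p.1 p.2) fun p hp => hw p.1 p.2 (mem_product.mp hp).2
end

section
/- Let d > 2(m+1). Then Σ_{r'=2}^m C(d+m, m+1)^{-1} · (m+1) · C(d+m-r'-2, m-r') ≤ 2(m+1)^4 / d^3. -/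
/-!
Each summand is at most `(m + 1) q ^ (r' + 1)` with `q = (m + 1) / d`: after enlarging the upper
index by one, `C(d+m-r'-2, m-r')` arises from `C(d+m, m+1)` by removing `r' + 1` elements
from both indices, and removing one element from `C(n, k)` with `k ≤ n` multiplies it by `k/n`,
a ratio that only decreases along the way.
Since `d > 2(m+1)` gives `q ≤ 1/2`, the geometric tail starting at `q ^ 3` sums to at most
`2 q ^ 3`.
-/

open Finset

theorem Nat.choose_sub_mul_pow_le {n k j : ℕ} (hjk : j ≤ k) (hkn : k ≤ n) :
    (n - j).choose (k - j) * n ^ j ≤ n.choose k * k ^ j := by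
  induction j with
  | zero => simp
  | succ j ih =>
    have hn : n - (j + 1) + 1 = n - j := by omega
    have hk : k - (j + 1) + 1 = k - j := by omega
    have hpascal : (n - (j + 1) + 1) * (n - (j + 1)).choose (k - (j + 1))
        = (n - j).choose (k - j) * (k - j) := by
      rw [Nat.add_one_mul_choose_eq, hn, hk]
    have hratio : (k - j) * n ≤ k * (n - j) := by
      rw [Nat.sub_mul, Nat.mul_sub]
      exact Nat.sub_le_sub_left (by rw [Nat.mul_comm]; exact Nat.mul_le_mul_left j hkn) _
    refine Nat.le_of_mul_le_mul_left ?_ (show 0 < n - (j + 1) + 1 by omega)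
    calc (n - (j + 1) + 1) * ((n - (j + 1)).choose (k - (j + 1)) * n ^ (j + 1))
        = (n - j).choose (k - j) * n ^ j * ((k - j) * n) := by
          rw [← mul_assoc, hpascal]; ring
      _ ≤ n.choose k * k ^ j * (k * (n - j)) := Nat.mul_le_mul (ih (by omega)) hratio
      _ = (n - (j + 1) + 1) * (n.choose k * k ^ (j + 1)) := by rw [hn]; ring

theorem choose_mul_pow_le_choose_mul_pow {d m r : ℕ} (hd : 0 < d) (hr : r ≤ m) :
    (d + m - r - 2).choose (m - r) * d ^ (r + 1) ≤ (d + m).choose (m + 1) * (m + 1) ^ (r + 1) :=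
  calc (d + m - r - 2).choose (m - r) * d ^ (r + 1)
      ≤ (d + m - (r + 1)).choose (m + 1 - (r + 1)) * (d + m) ^ (r + 1) := by
        rw [Nat.add_sub_add_right]
        exact Nat.mul_le_mul (Nat.choose_le_choose _ (by omega))
          (Nat.pow_le_pow_left (Nat.le_add_right d m) _)
    _ ≤ (d + m).choose (m + 1) * (m + 1) ^ (r + 1) :=
        Nat.choose_sub_mul_pow_le (by omega) (by omega)

theorem cast_choose_div_choose_le {d m r : ℕ} (hd : 0 < d) (hr : r ≤ m) :
    ((d + m - r - 2).choose (m - r) : ℝ) / (d + m).choose (m + 1)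
      ≤ (((m : ℝ) + 1) / d) ^ (r + 1) := by
  have hchoose : (0 : ℝ) < (d + m).choose (m + 1) := by
    exact_mod_cast Nat.choose_pos (by omega)
  rw [div_pow, div_le_div_iff₀ hchoose (by positivity), mul_comm _ ((d + m).choose (m + 1) : ℝ)]
  exact_mod_cast choose_mul_pow_le_choose_mul_pow hd hr

theorem sum_Ico_pow_le_two_mul_pow {q : ℝ} (hq₀ : 0 ≤ q) (hq : 2 * q ≤ 1) (a b : ℕ) :
    ∑ i ∈ Ico a b, q ^ i ≤ 2 * q ^ a :=
  calc ∑ i ∈ Ico a b, q ^ i ≤ q ^ a / (1 - q) := geom_sum_Ico_le_of_lt_one hq₀ (by linarith)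
    _ ≤ 2 * q ^ a := by
      rw [div_le_iff₀ (by linarith)]
      nlinarith [pow_nonneg hq₀ a]

theorem diagonal_contribution_bound_general (d m : ℕ) (hd : 2 * (m + 1) < d) :
    ∑ r' ∈ Finset.Icc 2 m,
        ((Nat.choose (d + m) (m + 1) : ℝ))⁻¹ * ((m : ℝ) + 1) *
          (Nat.choose (d + m - r' - 2) (m - r') : ℝ)
      ≤ 2 * ((m : ℝ) + 1) ^ 4 / (d : ℝ) ^ 3 := by
  have hd₀ : 0 < d := by omega
  set q : ℝ := ((m : ℝ) + 1) / d with hq_def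
  have hq₀ : 0 ≤ q := by positivity
  have hq : 2 * q ≤ 1 := by
    rw [hq_def, mul_div_assoc', div_le_one (by positivity)]
    exact_mod_cast hd.le
  calc _ ≤ ∑ r' ∈ Icc 2 m, ((m : ℝ) + 1) * q ^ (r' + 1) := by
        refine sum_le_sum fun r' hr' => ?_
        rw [mul_assoc, inv_mul_eq_div, mul_div_assoc]
        exact mul_le_mul_of_nonneg_left (cast_choose_div_choose_le hd₀ (mem_Icc.1 hr').2)
          (by positivity)
    _ = ((m : ℝ) + 1) * q * ∑ r' ∈ Ico 2 (m + 1), q ^ r' := by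
        rw [mul_sum, Ico_add_one_right_eq_Icc]
        exact sum_congr rfl fun _ _ => by ring
    _ ≤ ((m : ℝ) + 1) * q * (2 * q ^ 2) := by
        gcongr
        exact sum_Ico_pow_le_two_mul_pow hq₀ hq 2 (m + 1)
    _ = 2 * ((m : ℝ) + 1) ^ 4 / (d : ℝ) ^ 3 := by
        rw [hq_def]; ring

/-- **Diagonal contribution bound in the PGM analysis**: for `d > 2(m+1)`,
`Σ_{r'=2}^m C(d+m, m+1)⁻¹ (m+1) C(d+m-r'-2, m-r') ≤ 2(m+1)^4 / d³`. -/
theorem diagonal_contribution_bound (d m : ℕ) (hm : 1 ≤ m) (hd : 2 * (m + 1) < d) :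
    ∑ r' ∈ Finset.Icc 2 m,
        ((Nat.choose (d + m) (m + 1) : ℝ))⁻¹ * ((m : ℝ) + 1) *
          (Nat.choose (d + m - r' - 2) (m - r') : ℝ)
      ≤ 2 * ((m : ℝ) + 1) ^ 4 / (d : ℝ) ^ 3 :=
  diagonal_contribution_bound_general d m hd
end

section
/- There exists a constant C'' > 0 (independent of d and m) such that for all integers d > 2(m+1) and m ≥ 1: Σ_{r,r'=1}^m C(d+m, m+1)^{-1} · d · (m+1) · C(d+m-r-r'-4, m-r-r'-1) ≤ C'' · m^7 / d^3, where terms with m-r-r'-1 < 0 are taken to be zero. -/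
/-!
Write `e = d - 3` and `j = m - r - r' - 1`, so the numerator is `C(e + j, e)`. Since
`(j + 1) C(e + j + 1, e) = (e + j + 1) C(e + j, e)`, each unit increase of `j` gains a factor of at least
`(e + 1) / (j + 1)`; four increases and monotonicity of `C(·, e)` give
`(d - 2)⁴ C(e + j, e) ≤ (m + 1)⁴ C(d + m, m + 1)`. Each of the `m²` terms is therefore
`O(d (m + 1)⁵ / d⁴) = O(m⁵ / d³)`.
-/

namespace Nat

theorem add_one_mul_choose_le (e j : ℕ) :
    (e + 1) * (e + j).choose e ≤ (j + 1) * (e + j + 1).choose e := by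
  have h := choose_mul_succ_eq (e + j) e
  rw [show e + j + 1 - e = j + 1 by omega] at h
  calc (e + 1) * (e + j).choose e ≤ (e + j).choose e * (e + j + 1) := by
        rw [mul_comm]; gcongr; omega
    _ = (j + 1) * (e + j + 1).choose e := by rw [h, mul_comm]

theorem add_one_pow_mul_choose_le (e j i : ℕ) :
    (e + 1) ^ i * (e + j).choose e ≤ (j + i) ^ i * (e + j + i).choose e := by
  induction i with
  | zero => simp
  | succ i ih =>
    calc (e + 1) ^ (i + 1) * (e + j).choose e
        = (e + 1) * ((e + 1) ^ i * (e + j).choose e) := by ring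
      _ ≤ (e + 1) * ((j + i) ^ i * (e + (j + i)).choose e) := by
        rw [← add_assoc]; gcongr
      _ = (j + i) ^ i * ((e + 1) * (e + (j + i)).choose e) := by ring
      _ ≤ (j + i) ^ i * ((j + i + 1) * (e + (j + i) + 1).choose e) :=
        Nat.mul_le_mul_left _ (add_one_mul_choose_le e (j + i))
      _ ≤ (j + (i + 1)) ^ (i + 1) * (e + j + (i + 1)).choose e := by
        rw [show e + (j + i) + 1 = e + j + (i + 1) by ring, ← mul_assoc, pow_succ,
          show j + i + 1 = j + (i + 1) by ring]
        gcongr; omega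

theorem add_one_pow_four_mul_choose_le {e j m : ℕ} (h : j + 3 ≤ m) :
    (e + 1) ^ 4 * (e + j).choose j ≤ (m + 1) ^ 4 * (e + m + 3).choose (m + 1) := by
  calc (e + 1) ^ 4 * (e + j).choose j = (e + 1) ^ 4 * (e + j).choose e := by
        rw [choose_symm_add]
    _ ≤ (j + 4) ^ 4 * (e + j + 4).choose e := add_one_pow_mul_choose_le e j 4
    _ ≤ (m + 1) ^ 4 * (e + (m + 1)).choose e :=
      Nat.mul_le_mul (Nat.pow_le_pow_left (by omega) 4) (choose_le_choose _ (by omega))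
    _ = (m + 1) ^ 4 * (e + (m + 1)).choose (m + 1) := by rw [choose_symm_add]
    _ ≤ (m + 1) ^ 4 * (e + m + 3).choose (m + 1) :=
      Nat.mul_le_mul_left _ (choose_le_choose _ (by omega))

end Nat

theorem offdiagonal_term_le {d m r r' : ℕ} (hd : 4 ≤ d) (hr : 1 ≤ r) (hr' : 1 ≤ r')
    (hrr : r + r' + 1 ≤ m) :
    ((Nat.choose (d + m) (m + 1) : ℝ))⁻¹ * (d : ℝ) * ((m : ℝ) + 1) *
        (Nat.choose (d + m - r - r' - 4) (m - r - r' - 1) : ℝ)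
      ≤ 512 * (m : ℝ) ^ 5 / (d : ℝ) ^ 3 := by
  set N := Nat.choose (d + m - r - r' - 4) (m - r - r' - 1)
  set M := Nat.choose (d + m) (m + 1)
  have key : (d - 2) ^ 4 * N ≤ (m + 1) ^ 4 * M := by
    have h := Nat.add_one_pow_four_mul_choose_le (e := d - 3) (j := m - r - r' - 1) (m := m)
      (by omega)
    rwa [show d - 3 + 1 = d - 2 by omega,
      show d - 3 + (m - r - r' - 1) = d + m - r - r' - 4 by omega,
      show d - 3 + m + 3 = d + m by omega] at h
  have hnat : d ^ 4 * (m + 1) * N ≤ 512 * m ^ 5 * M :=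
    calc d ^ 4 * (m + 1) * N ≤ (2 * (d - 2)) ^ 4 * (m + 1) * N := by gcongr; omega
      _ = 16 * (m + 1) * ((d - 2) ^ 4 * N) := by ring
      _ ≤ 16 * (m + 1) * ((m + 1) ^ 4 * M) := by gcongr
      _ = 16 * (m + 1) ^ 5 * M := by ring
      _ ≤ 16 * (2 * m) ^ 5 * M := by gcongr; omega
      _ = 512 * m ^ 5 * M := by ring
  have hM : (0 : ℝ) < M := by exact_mod_cast Nat.choose_pos (by omega)
  have hd0 : (0 : ℝ) < d := by exact_mod_cast (show 0 < d by omega)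
  rw [show (M : ℝ)⁻¹ * d * (m + 1) * N = d * (m + 1) * N / M by ring,
    div_le_div_iff₀ hM (by positivity)]
  calc (d : ℝ) * (m + 1) * N * d ^ 3 = (d ^ 4 * (m + 1) * N : ℕ) := by push_cast; ring
    _ ≤ (512 * m ^ 5 * M : ℕ) := by exact_mod_cast hnat
    _ = 512 * (m : ℝ) ^ 5 * M := by push_cast; ring

/-- **Off-diagonal contribution bound in the PGM analysis**: there is a constant `C'' > 0`,
independent of `d` and `m`, such that for all `m ≥ 1` and `d > 2(m+1)`,
`Σ_{r,r'=1}^m C(d+m, m+1)⁻¹ · d · (m+1) · C(d+m-r-r'-4, m-r-r'-1) ≤ C'' m⁷ / d³`,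
where terms with `m - r - r' - 1 < 0` are taken to be zero. -/
theorem offdiagonal_contribution_bound :
    ∃ C'' : ℝ, 0 < C'' ∧ ∀ d m : ℕ, 1 ≤ m → 2 * (m + 1) < d →
      ∑ r ∈ Finset.Icc 1 m, ∑ r' ∈ Finset.Icc 1 m,
          ((Nat.choose (d + m) (m + 1) : ℝ))⁻¹ * (d : ℝ) * ((m : ℝ) + 1) *
            (if r + r' + 1 ≤ m then (Nat.choose (d + m - r - r' - 4) (m - r - r' - 1) : ℝ)
              else 0)
        ≤ C'' * (m : ℝ) ^ 7 / (d : ℝ) ^ 3 := by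
  refine ⟨512, by norm_num, fun d m _ hd => ?_⟩
  calc _ ≤ ∑ r ∈ Finset.Icc 1 m, ∑ r' ∈ Finset.Icc 1 m, 512 * (m : ℝ) ^ 5 / (d : ℝ) ^ 3 := by
        gcongr with r hr r' hr'
        rw [Finset.mem_Icc] at hr hr'
        split_ifs with hrr
        · exact offdiagonal_term_le (by omega) hr.1 hr'.1 hrr
        · rw [mul_zero]; positivity
    _ = 512 * (m : ℝ) ^ 7 / (d : ℝ) ^ 3 := by
        simp only [Finset.sum_const, Nat.card_Icc, nsmul_eq_mul]
        push_cast
        ring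
end
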